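/- Let F be an n-uniform hypergraph in which every hyperedge has nonempty intersection with at most D other hyperedges, where (D+1) ≤ 2^(n-1)/e (e Euler's number). Then F has a proper 2-coloring, i.e., a red/blue vertex coloring with no monochromatic hyperedge. -/

import Mathlib

/-!
Colour the vertices of `S = ⋃ E` uniformly at random, i.e. pick the red class `A ⊆ S` uniformly.
Whatever is known about the colours outside an edge `e`, the probability that `e` is
monochromatic is `2 / 2 ^ n`, so this event is lopsidedly dependent only on the at most `D`
edges meeting `e`, and the symmetric local lemma with `exp 1 * p * (D + 1) ≤ 1` applies.

The local lemma itself is the usual induction: conditioned on avoiding the events of `T`, the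
event `B i` has probability at most `x`. Splitting `T` into the neighbours `T₁` of `i` and the
rest `T₂`,
  `P(B i | T) ≤ P(B i ∧ T₂) / P(T) ≤ p P(T₂) / P(T) ≤ p / (1 - x) ^ #T₁ ≤ x`,
where the third step peels the events of `T₁` off one at a time using the induction
hypothesis.
-/

open Finset Real

lemma exp_neg_one_le_one_sub_inv_pow (D : ℕ) : exp (-1) ≤ (1 - 1 / (D + 1 : ℝ)) ^ D := by
  rcases Nat.eq_zero_or_pos D with rfl | hD
  · simp [exp_le_one_iff]
  have hD' : (0 : ℝ) < D := by exact_mod_cast hD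
  have hinv : (1 - 1 / (D + 1 : ℝ)) = (1 + 1 / (D : ℝ))⁻¹ := by field_simp; ring
  have hexp : (1 + 1 / (D : ℝ)) ^ D ≤ exp 1 := by
    calc (1 + 1 / (D : ℝ)) ^ D ≤ exp (1 / (D : ℝ)) ^ D := by
          gcongr; linarith [add_one_le_exp (1 / D : ℝ)]
      _ = exp 1 := by rw [← exp_nat_mul, mul_one_div_cancel hD'.ne']
  rw [hinv, inv_pow, exp_neg]
  exact inv_anti₀ (by positivity) hexp

section LocalLemma

variable {α ι : Type*} (Ω : Finset α) (B : ι → α → Prop) [∀ i, DecidablePred (B i)]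

def avoiding (T : Finset ι) : Finset α :=
  Ω.filter fun ω => ∀ i ∈ T, ¬ B i ω

@[simp]
lemma avoiding_empty : avoiding Ω B ∅ = Ω := by
  simp [avoiding]

lemma avoiding_anti {T T' : Finset ι} (h : T ⊆ T') : avoiding Ω B T' ⊆ avoiding Ω B T := by
  intro ω
  simp only [avoiding, mem_filter]
  exact fun ⟨hω, hT'⟩ => ⟨hω, fun i hi => hT' i (h hi)⟩

lemma card_avoiding_insert [DecidableEq ι] (i : ι) (T : Finset ι) :
    #(avoiding Ω B (insert i T)) + #((avoiding Ω B T).filter (B i)) = #(avoiding Ω B T) := by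
  have : avoiding Ω B (insert i T) = (avoiding Ω B T).filter (¬ B i ·) := by
    ext; simp only [avoiding, mem_filter, forall_mem_insert]; tauto
  rw [this, add_comm, card_filter_add_card_filter_not]

/-- Counting form of `P(B i | ⋂ j ∈ T, (B j)ᶜ) ≤ p` for every `T ⊆ I` avoiding `i` and its
dependency neighbourhood `Γ i`. -/
def IsLopsidedDependency (I : Finset ι) (Γ : ι → Finset ι) (p : ℝ) : Prop :=
  ∀ i ∈ I, ∀ T ⊆ I, i ∉ T → Disjoint T (Γ i) →
    (#((avoiding Ω B T).filter (B i)) : ℝ) ≤ p * #(avoiding Ω B T)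

variable {Ω B} [DecidableEq ι] {x : ℝ}

lemma one_sub_pow_mul_card_avoiding_le (hx : x ≤ 1) (T U : Finset ι)
    (hU : ∀ U' ⊆ U, ∀ i ∈ U \ U',
      (#((avoiding Ω B (T ∪ U')).filter (B i)) : ℝ) ≤ x * #(avoiding Ω B (T ∪ U'))) :
    (1 - x) ^ #U * #(avoiding Ω B T) ≤ #(avoiding Ω B (T ∪ U)) := by
  induction U using Finset.induction_on with
  | empty => simp
  | @insert i U hiU ih =>
    have hstep := card_avoiding_insert Ω B i (T ∪ U)
    have hbad := hU U (subset_insert i U) i (by simp [hiU])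
    have hprev := ih fun U' hU' j hj =>
      hU U' (hU'.trans (subset_insert i U)) j (sdiff_subset_sdiff (subset_insert i U) le_rfl hj)
    rw [union_insert, card_insert_of_notMem hiU, pow_succ']
    have : (0 : ℝ) ≤ 1 - x := by linarith
    calc (1 - x) * (1 - x) ^ #U * #(avoiding Ω B T)
        ≤ (1 - x) * #(avoiding Ω B (T ∪ U)) := by
          rw [mul_assoc]; exact mul_le_mul_of_nonneg_left hprev this
      _ ≤ #(avoiding Ω B (insert i (T ∪ U))) := by
          rw [← Nat.cast_inj (R := ℝ), Nat.cast_add] at hstep; linarith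

variable {I : Finset ι} {Γ : ι → Finset ι} {p : ℝ} {D : ℕ}

lemma card_filter_avoiding_le (hx₀ : 0 ≤ x) (hx₁ : x ≤ 1) (hΓ : ∀ i ∈ I, #(Γ i) ≤ D)
    (hp : p ≤ x * (1 - x) ^ D) (hB : IsLopsidedDependency Ω B I Γ p) (T : Finset ι)
    (hT : T ⊆ I) (i : ι) (hi : i ∈ I) :
    (#((avoiding Ω B T).filter (B i)) : ℝ) ≤ x * #(avoiding Ω B T) := by
  induction T using Finset.strongInduction generalizing i with | H T ih => ?_
  by_cases hiT : i ∈ T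
  · have : (avoiding Ω B T).filter (B i) = ∅ := by
      ext ω; simp only [avoiding, mem_filter]; grind
    rw [this, card_empty, Nat.cast_zero]
    positivity
  set T₁ := T.filter (· ∈ Γ i)
  set T₂ := T.filter (· ∉ Γ i)
  have hT₁ : #T₁ ≤ D := (card_le_card fun j hj => (mem_filter.1 hj).2).trans (hΓ i hi)
  have hsplit : T₂ ∪ T₁ = T := by rw [union_comm]; exact filter_union_filter_not_eq _ T
  have hG : (1 - x) ^ #T₁ * #(avoiding Ω B T₂) ≤ #(avoiding Ω B T) := by
    rw [← hsplit]
    refine one_sub_pow_mul_card_avoiding_le hx₁ T₂ T₁ fun U hU j hj => ?_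
    obtain ⟨hjT₁, hjU⟩ := mem_sdiff.1 hj
    have hlt : T₂ ∪ U ⊂ T := by
      refine (ssubset_iff_of_subset ?_).2 ⟨j, (mem_filter.1 hjT₁).1, ?_⟩
      · exact union_subset (filter_subset _ T) (hU.trans (filter_subset _ T))
      · simp only [mem_union, mem_filter, not_or, T₂]
        exact ⟨fun h => h.2 (mem_filter.1 hjT₁).2, hjU⟩
    exact ih _ hlt (hlt.subset.trans hT) j (hT (mem_filter.1 hjT₁).1)
  have hT₂ : Disjoint T₂ (Γ i) := disjoint_left.2 fun _ hj => (mem_filter.1 hj).2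
  calc (#((avoiding Ω B T).filter (B i)) : ℝ)
      ≤ #((avoiding Ω B T₂).filter (B i)) := by
        gcongr; exact avoiding_anti Ω B (filter_subset _ T)
    _ ≤ p * #(avoiding Ω B T₂) :=
        hB i hi T₂ ((filter_subset _ T).trans hT) (fun h => hiT (mem_filter.1 h).1) hT₂
    _ ≤ x * ((1 - x) ^ #T₁ * #(avoiding Ω B T₂)) := by
        rw [← mul_assoc]; gcongr
        exact hp.trans <| mul_le_mul_of_nonneg_left
          (pow_le_pow_of_le_one (by linarith) (by linarith) hT₁) hx₀
    _ ≤ x * #(avoiding Ω B T) := by gcongr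

theorem one_sub_pow_mul_card_le_card_avoiding (hx₀ : 0 ≤ x) (hx₁ : x ≤ 1)
    (hΓ : ∀ i ∈ I, #(Γ i) ≤ D) (hp : p ≤ x * (1 - x) ^ D)
    (hB : IsLopsidedDependency Ω B I Γ p) :
    (1 - x) ^ #I * #Ω ≤ #(avoiding Ω B I) := by
  simpa using one_sub_pow_mul_card_avoiding_le hx₁ ∅ I fun U hU i hi =>
    card_filter_avoiding_le hx₀ hx₁ hΓ hp hB _ (by simpa using hU) i (sdiff_subset hi)

theorem avoiding_nonempty (hΩ : Ω.Nonempty) (hx₀ : 0 ≤ x) (hx₁ : x < 1)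
    (hΓ : ∀ i ∈ I, #(Γ i) ≤ D) (hp : p ≤ x * (1 - x) ^ D)
    (hB : IsLopsidedDependency Ω B I Γ p) :
    (avoiding Ω B I).Nonempty := by
  have hpos : (0 : ℝ) < (1 - x) ^ #I * #Ω := by
    have : (0 : ℝ) < #Ω := by exact_mod_cast hΩ.card_pos
    have : (0 : ℝ) < 1 - x := by linarith
    positivity
  have := hpos.trans_le (one_sub_pow_mul_card_le_card_avoiding hx₀ hx₁.le hΓ hp hB)
  exact card_pos.1 (by exact_mod_cast this)

theorem avoiding_nonempty_of_exp_mul_le_one (hΩ : Ω.Nonempty) (hΓ : ∀ i ∈ I, #(Γ i) ≤ D)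
    (hp : exp 1 * p * (D + 1) ≤ 1) (hB : IsLopsidedDependency Ω B I Γ p) :
    (avoiding Ω B I).Nonempty := by
  have hp' : p * (D + 1) ≤ exp (-1) := by
    rw [exp_neg, ← one_div, le_div_iff₀ (exp_pos 1)]
    linarith
  -- `x = 1 / (D + 1)` as usual, except for `D = 0`, where that choice would give `x = 1`.
  rcases Nat.eq_zero_or_pos D with rfl | hD
  · refine avoiding_nonempty hΩ (exp_pos _).le (exp_lt_one_iff.2 neg_one_lt_zero) hΓ ?_ hB
    simpa using hp'
  · have hD' : (1 : ℝ) < D + 1 := by norm_cast; omega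
    refine avoiding_nonempty hΩ (x := 1 / (D + 1)) (by positivity)
      ((div_lt_one (by positivity)).2 hD') hΓ ?_ hB
    calc p ≤ 1 / (D + 1) * exp (-1) := by
          rw [one_div_mul_eq_div, le_div_iff₀ (by positivity)]; exact hp'
      _ ≤ 1 / (D + 1) * (1 - 1 / (D + 1)) ^ D := by
          gcongr; exact exp_neg_one_le_one_sub_inv_pow D

end LocalLemma

section Hypergraph

variable {V : Type*} [DecidableEq V]

/-- A 2-colouring is encoded by its red class `A`. -/
def IsMonochromatic (e A : Finset V) : Prop := e ⊆ A ∨ Disjoint e A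

instance (e : Finset V) : DecidablePred (IsMonochromatic e) := fun _ => instDecidableOr

lemma isMonochromatic_sdiff_iff {e f A : Finset V} (h : Disjoint f e) :
    IsMonochromatic f (A \ e) ↔ IsMonochromatic f A := by
  simp only [IsMonochromatic, subset_sdiff, h, and_true]
  simp only [disjoint_left, mem_sdiff] at h ⊢
  grind

lemma eq_of_sdiff_union_eq {e A A' C C' : Finset V} (hA : IsMonochromatic e A)
    (hA' : IsMonochromatic e A') (hC : C ⊆ e) (hC' : C' ⊆ e) (h : A \ e ∪ C = A' \ e ∪ C')
    (he : e ⊆ A ↔ e ⊆ A') : A = A' ∧ C = C' := by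
  unfold IsMonochromatic at hA hA'
  simp only [subset_iff, disjoint_left, Finset.ext_iff, mem_union, mem_sdiff] at *
  grind

lemma card_filter_isMonochromatic_mul_le {S e : Finset V} {Q : Finset V → Prop} [DecidablePred Q]
    (heS : e ⊆ S) (hQ : ∀ A, Q (A \ e) ↔ Q A) :
    #((S.powerset.filter Q).filter (IsMonochromatic e)) * 2 ^ #e ≤
      2 * #(S.powerset.filter Q) := by
  -- Recolouring `e` by any `C ⊆ e`, while remembering the colour of a monochromatic `e`,
  -- is injective.
  rw [← card_powerset, ← card_product, mul_comm 2, ← Fintype.card_bool, ← card_univ,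
    ← card_product]
  refine card_le_card_of_injOn (fun AC => (AC.1 \ e ∪ AC.2, decide (e ⊆ AC.1))) ?_ ?_
  · rintro ⟨A, C⟩ hAC
    simp only [coe_product, Set.mem_prod, mem_coe, mem_filter, mem_powerset] at hAC ⊢
    refine ⟨⟨union_subset (sdiff_subset.trans hAC.1.1.1) (hAC.2.trans heS), ?_⟩, mem_univ _⟩
    rw [← hQ, union_sdiff_distrib, _root_.sdiff_idem, sdiff_eq_empty_iff_subset.2 hAC.2,
      union_empty, hQ]
    exact hAC.1.1.2
  · rintro ⟨A, C⟩ hAC ⟨A', C'⟩ hAC' h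
    simp only [coe_product, Set.mem_prod, mem_coe, mem_filter, mem_powerset, Prod.mk.injEq,
      decide_eq_decide] at hAC hAC' h
    simpa using eq_of_sdiff_union_eq hAC.1.2 hAC'.1.2 hAC.2 hAC'.2 h.1 h.2

lemma exists_mem_ne_of_not_isMonochromatic {e A : Finset V} (h : ¬ IsMonochromatic e A) :
    ∃ v ∈ e, ∃ w ∈ e, decide (v ∈ A) ≠ decide (w ∈ A) := by
  simp only [IsMonochromatic, not_or, not_subset, not_disjoint_iff] at h
  obtain ⟨⟨v, hve, hvA⟩, w, hwe, hwA⟩ := h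
  exact ⟨v, hve, w, hwe, by simp [hvA, hwA]⟩

lemma isLopsidedDependency_isMonochromatic {S : Finset V} {E : Finset (Finset V)} {n : ℕ}
    (hS : ∀ e ∈ E, e ⊆ S) (hunif : ∀ e ∈ E, #e = n) :
    IsLopsidedDependency S.powerset IsMonochromatic E
      (fun e => E.filter fun f => f ≠ e ∧ (e ∩ f).Nonempty) (2 / 2 ^ n) := by
  intro e he T hTE heT hT
  have hfe : ∀ f ∈ T, Disjoint f e := fun f hf => by
    have := disjoint_left.1 hT hf
    simp only [mem_filter, hTE hf, true_and, not_and, not_nonempty_iff_eq_empty] at this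
    rw [disjoint_iff_inter_eq_empty, inter_comm]
    exact this fun hfe => heT (hfe ▸ hf)
  have hcount := card_filter_isMonochromatic_mul_le (hS e he)
    (Q := fun A => ∀ f ∈ T, ¬ IsMonochromatic f A)
    fun A => forall₂_congr fun f hf => not_congr (isMonochromatic_sdiff_iff (hfe f hf))
  rw [hunif e he] at hcount
  rw [div_mul_eq_mul_div, le_div_iff₀ (by positivity)]
  exact_mod_cast hcount

end Hypergraph

/-- Erdős–Lovász 2-coloring theorem: if every hyperedge of an `n`-uniform
hypergraph meets at most `D` other hyperedges and `e·(D+1) ≤ 2^(n-1)`, then the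
hypergraph has a proper 2-coloring. -/
theorem erdos_lovasz_two_coloring {V : Type} [DecidableEq V]
    (n D : ℕ) (E : Finset (Finset V))
    (hunif : ∀ e ∈ E, e.card = n)
    (hnbhd : ∀ e ∈ E, (E.filter fun f => f ≠ e ∧ (e ∩ f).Nonempty).card ≤ D)
    (hD : ((D : ℝ) + 1) ≤ (2 : ℝ) ^ (n - 1) / Real.exp 1) :
    ∃ c : V → Bool, ∀ e ∈ E, ∃ v ∈ e, ∃ w ∈ e, c v ≠ c w := by
  rw [le_div_iff₀ (exp_pos 1)] at hD
  have hn : n ≠ 0 := by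
    rintro rfl
    have : (1 : ℝ) < exp 1 := one_lt_exp_iff.2 one_pos
    norm_num at hD
    nlinarith [(Nat.cast_nonneg D : (0 : ℝ) ≤ D)]
  have hp : exp 1 * (2 / 2 ^ n) * (D + 1) ≤ 1 := by
    obtain ⟨m, rfl⟩ := Nat.exists_eq_add_one_of_ne_zero hn
    rw [Nat.add_sub_cancel] at hD
    rw [pow_succ]
    field_simp
    linarith
  obtain ⟨A, hA⟩ := avoiding_nonempty_of_exp_mul_le_one (Ω := (E.biUnion id).powerset)
    ⟨∅, empty_mem_powerset _⟩ hnbhd hp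
    (isLopsidedDependency_isMonochromatic (fun e he => subset_biUnion_of_mem id he) hunif)
  exact ⟨fun v => decide (v ∈ A), fun e he =>
    exists_mem_ne_of_not_isMonochromatic ((mem_filter.1 hA).2 e he)⟩
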